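/- arXiv:0801.4061 — 2 statements merged into one kernel-verified Lean document; each statement's English description precedes it below -/
import Mathlib

section
/- Let 0 < a < 1 and let M be the symmetric 6×6 real matrix indexed by the labels (AB, AC, AD, BC, BD, CD) with entries: all diagonal entries equal to 2; M(AB,AC) = M(AB,BD) = M(BC,BD) = M(BC,AC) = M(CD,AC) = M(CD,BD) = M(AD,AC) = M(AD,BD) = 1 + a; M(AB,BC) = M(BC,CD) = M(CD,AD) = M(AB,AD) = 1 + a²; and M(AB,CD) = M(AD,BC) = M(AC,BD) = 2a. Then M is not positive semidefinite: there exists a vector v ∈ ℝ⁶ with vᵀ M v < 0. -/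
open Matrix
set_option maxRecDepth 4000

@[simp] lemma vec6_apply_five (a b c d e f : ℝ) : ![a, b, c, d, e, f] 5 = f := rfl

/-- The 6×6 Gram-candidate matrix of the six 2-tuples, indexed in the order
`(AB, AC, AD, BC, BD, CD)`. -/
def assignMatrix (a : ℝ) : Matrix (Fin 6) (Fin 6) ℝ :=
  !![2,       1 + a, 1 + a ^ 2, 1 + a ^ 2, 1 + a, 2 * a;
     1 + a,   2,     1 + a,     1 + a,     2 * a, 1 + a;
     1 + a ^ 2, 1 + a, 2,       2 * a,     1 + a, 1 + a ^ 2;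
     1 + a ^ 2, 1 + a, 2 * a,   2,         1 + a, 1 + a ^ 2;
     1 + a,   2 * a, 1 + a,     1 + a,     2,     1 + a;
     2 * a,   1 + a, 1 + a ^ 2, 1 + a ^ 2, 1 + a, 2]

/-- For `0 < a < 1`, the matrix `assignMatrix a` is not positive semidefinite:
there is a vector `v` with `vᵀ M v < 0`. -/
theorem assignMatrix_not_posSemidef (a : ℝ) (h0 : 0 < a) (h1 : a < 1) :
    ∃ v : Fin 6 → ℝ, v ⬝ᵥ (assignMatrix a).mulVec v < 0 := by
  refine ⟨![1, -2, 1, 1, -2, 1], ?_⟩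
  have : (![1, -2, 1, 1, -2, 1] : Fin 6 → ℝ) ⬝ᵥ (assignMatrix a).mulVec ![1, -2, 1, 1, -2, 1]
      = 8 * a * (a - 1) := by
    simp [assignMatrix, mulVec, dotProduct, Fin.sum_univ_succ, Matrix.cons_val_zero,
      Matrix.cons_val_succ]
    ring
  rw [this]
  nlinarith
end

section
/- Let 0 < a < 1 and let M be the symmetric 6×6 real matrix indexed by the labels (AB, AC, AD, BC, BD, CD) with entries: all diagonal entries equal to 2; M(AB,AC) = M(AB,BD) = M(BC,BD) = M(BC,AC) = M(CD,AC) = M(CD,BD) = M(AD,AC) = M(AD,BD) = 1 + a; M(AB,BC) = M(BC,CD) = M(CD,AD) = M(AB,AD) = 1 + a²; and M(AB,CD) = M(AD,BC) = M(AC,BD) = 2a. Then there do not exist a real inner product space H and six vectors φ₁,…,φ₆ ∈ H such that ⟨φᵢ, φⱼ⟩ = M(i,j) for all 1 ≤ i, j ≤ 6. -/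
open Matrix

/-!
A Gram matrix is positive semidefinite, but `assignMatrix a` is not: on the vector
`c = (-1, 2, -1, -1, 2, -1)` (weight `2` on `AC` and `BD`, `-1` on the other four pairs) its
quadratic form is `cᵀ M c = -8 a (1 - a)`, which is negative for `0 < a < 1`.
-/

lemma assignMatrix_mulVec (a : ℝ) :
    assignMatrix a *ᵥ ![-1, 2, -1, -1, 2, -1] = (2 * a * (1 - a)) • ![1, 0, 1, 1, 0, 1] := by
  ext i
  fin_cases i <;>
    simp [assignMatrix, mulVec, dotProduct, Fin.sum_univ_six] <;> ring

lemma dotProduct_assignMatrix_mulVec (a : ℝ) :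
    ![-1, 2, -1, -1, 2, -1] ⬝ᵥ (assignMatrix a *ᵥ ![-1, 2, -1, -1, 2, -1]) = -8 * a * (1 - a) := by
  rw [assignMatrix_mulVec]
  simp only [dotProduct, Fin.sum_univ_six, Pi.smul_apply, smul_eq_mul, cons_val_zero,
    cons_val_one, cons_val]
  ring

lemma not_posSemidef_assignMatrix {a : ℝ} (h0 : 0 < a) (h1 : a < 1) :
    ¬ (assignMatrix a).PosSemidef := by
  intro hpsd
  have hnonneg := hpsd.dotProduct_mulVec_nonneg ![-1, 2, -1, -1, 2, -1]
  rw [star_trivial, dotProduct_assignMatrix_mulVec] at hnonneg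
  nlinarith [mul_pos h0 (sub_pos.mpr h1)]

/-- For `0 < a < 1`, there is no real inner product space `H` and vectors
`φ₁, …, φ₆ ∈ H` whose Gram matrix is `assignMatrix a`. -/
theorem assignMatrix_not_gram (a : ℝ) (h0 : 0 < a) (h1 : a < 1) :
    ¬ ∃ (H : Type) (nG : NormedAddCommGroup H)
        (ip : @InnerProductSpace ℝ H _ nG.toSeminormedAddCommGroup)
        (φ : Fin 6 → H),
        ∀ i j, @inner ℝ H ip.toInner (φ i) (φ j) = assignMatrix a i j := by
  rintro ⟨H, nG, ip, φ, hφ⟩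
  have hgram : gram ℝ φ = assignMatrix a := Matrix.ext hφ
  exact not_posSemidef_assignMatrix h0 h1 (hgram ▸ posSemidef_gram ℝ φ)
end
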